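/- Let k ≥ 4. For every v ∈ ℝ⁶ \ {0}, the symbol sequence 0 → 𝒱₀ →σ₀ 𝒱₁ →σ₁ 𝒱₂ →σ₂ 𝒱₃ → 0 is exact: σ₀ is injective, ker σ₁ = im σ₀, ker σ₂ = im σ₁, and σ₂ is surjective. Consequently the k-monogenic complex 0 → C^∞(ℝ⁶,𝒱₀) →𝒟₀ C^∞(ℝ⁶,𝒱₁) →𝒟₁ C^∞(ℝ⁶,𝒱₂) →𝒟₂ C^∞(ℝ⁶,𝒱₃) → 0 is an elliptic complex. -/

import Mathlib

open scoped BigOperators ComplexConjugate ENNReal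
open MeasureTheory

set_option maxHeartbeats 1000000

noncomputable section

/-- The index set `{1,2,3,4}` of spinor indices. -/
abbrev Idx := Fin 4

/-- Tensors with `q` (antisymmetric) superscripts and `p` (symmetric) subscripts,
each index ranging over `{1,2,3,4}`. -/
abbrev Tens (q p : ℕ) := (Fin q → Idx) → (Fin p → Idx) → ℂ

/-- Symmetry in the subscripts. -/
def SymSub {q p : ℕ} (f : Tens q p) : Prop :=
  ∀ (A : Fin q → Idx) (σ : Equiv.Perm (Fin p)) (B : Fin p → Idx), f A (B ∘ σ) = f A B

/-- Antisymmetry in the superscripts. -/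
def AntiSup {q p : ℕ} (f : Tens q p) : Prop :=
  ∀ (σ : Equiv.Perm (Fin q)) (A : Fin q → Idx) (B : Fin p → Idx),
    f (A ∘ σ) B = ((Equiv.Perm.sign σ : ℤ) : ℂ) * f A B

/-- Membership in `V_l = ⊙^p ℂ⁴ ⊗ ∧^q ℂ⁴`: symmetric in subscripts, antisymmetric in
superscripts. -/
def IsMixed {q p : ℕ} (f : Tens q p) : Prop := AntiSup f ∧ SymSub f

/-- Symmetrization `ξ_{(B₁…B_t)}` of a `t`-index tensor. -/
def symmetrize {t : ℕ} (ξ : (Fin t → Idx) → ℂ) : (Fin t → Idx) → ℂ :=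
  fun B => ((t.factorial : ℂ))⁻¹ * ∑ σ : Equiv.Perm (Fin t), ξ (B ∘ σ)

/-- Antisymmetrization `ξ_{[B₁…B_t]}` of a `t`-index tensor. -/
def antisymmetrize {t : ℕ} (ξ : (Fin t → Idx) → ℂ) : (Fin t → Idx) → ℂ :=
  fun B => ((t.factorial : ℂ))⁻¹ * ∑ σ : Equiv.Perm (Fin t),
    ((Equiv.Perm.sign σ : ℤ) : ℂ) * ξ (B ∘ σ)

/-- The contraction `𝒞(f)^{A₁…A_{q}}_{B₁…B_{p}} = Σ_C f^{C A₁…A_q}_{B₁…B_p C}`. -/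
def contr {q p : ℕ} (f : Tens (q+1) (p+1)) : Tens q p :=
  fun A B => ∑ C : Idx, f (Fin.cons C A) (Fin.snoc B C)

/-- The Hermitian inner product on tensors, induced from `⊗^k ℂ⁴`. -/
def tinner {q p : ℕ} (f h : Tens q p) : ℂ :=
  ∑ A : Fin q → Idx, ∑ B : Fin p → Idx, f A B * conj (h A B)

/-- The squared norm of a tensor. -/
def tnormSq {q p : ℕ} (f : Tens q p) : ℝ :=
  ∑ A : Fin q → Idx, ∑ B : Fin p → Idx, Complex.normSq (f A B)
/-- Points of `ℝ⁶`, with coordinates `x 0, …, x 5`. -/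
abbrev Pt := Fin 6 → ℝ

/-- Coefficients (in front of `∂_{x_j}`) of the operators `∇^{AB}`:
`∇^{12}=i∂₀+∂₅`, `∇^{13}=∂₃+i∂₄`, `∇^{14}=∂₁+i∂₂`, `∇^{23}=∂₁−i∂₂`,
`∇^{24}=−∂₃+i∂₄`, `∇^{34}=−i∂₀+∂₅`, antisymmetric. -/
def nablaCoeff : Fin 4 → Fin 4 → Fin 6 → ℂ :=
  ![![(0 : Fin 6 → ℂ), ![Complex.I,0,0,0,0,1], ![0,0,0,1,Complex.I,0], ![0,1,Complex.I,0,0,0]],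
    ![-![Complex.I,0,0,0,0,1], (0 : Fin 6 → ℂ), ![0,1,-Complex.I,0,0,0], ![0,0,0,-1,Complex.I,0]],
    ![-![0,0,0,1,Complex.I,0], -![0,1,-Complex.I,0,0,0], (0 : Fin 6 → ℂ), ![-Complex.I,0,0,0,0,1]],
    ![-![0,1,Complex.I,0,0,0], -![0,0,0,-1,Complex.I,0], -![-Complex.I,0,0,0,0,1], (0 : Fin 6 → ℂ)]]

/-- Membership in `𝒱₀` (no contraction condition). -/
def InV0 {p : ℕ} (t : Tens 0 p) : Prop := IsMixed t

/-- Membership in `𝒱_l`, `l ≥ 1`: mixed symmetry and vanishing contraction. -/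
def InV {q p : ℕ} (t : Tens (q+1) (p+1)) : Prop :=
  IsMixed t ∧ ∀ A B, contr t A B = 0

/-- The antisymmetric matrix `M = M(v)`, the symbol of `(∇^{AB})` at `v` (each `∂_{x_j}`
replaced by `v_j / i`). -/
def symbM (v : Pt) (A B : Fin 4) : ℂ :=
  Complex.I⁻¹ * ∑ j : Fin 6, nablaCoeff A B j * ((v j : ℝ) : ℂ)

/-- The principal symbol `σ_l` of `𝒟_l` at `v`:
`(σ_l ξ)^{A₁…A_{l+1}}_{B₂…} = Σ_{B₁} M^{B₁[A₁} ξ^{A₂…A_{l+1}]}_{B₁…}`. -/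
def symb {q p : ℕ} (v : Pt) (ξ : Tens q (p+1)) : Tens (q+1) p :=
  fun A B => antisymmetrize
    (fun A' => ∑ B₁ : Idx, symbM v B₁ (A' 0) * ξ (Fin.tail A') (Fin.cons B₁ B)) A


/-!
For `v ≠ 0` the matrix `M = M(v)` satisfies `M Mᴴ = |v|² I`, hence is invertible. On tensors
antisymmetric in their superscripts `σ_q = (q+1)⁻¹ d`, where `d = extSymb v` expands the
antisymmetrization along the superscript slots. One has `d ∘ d = 0`, since `M ⊗ M` is contracted
against a tensor symmetric in its subscripts, and the operator
`(H η)^{A}_{B} = Σᵢ (M⁻¹)_{Bᵢ E} η^{E A}_{B∖Bᵢ}` satisfies `H d + d H = -(p+q+2)`. So `H`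
provides preimages, and the remaining work is to keep them trace-free. As the contraction
anticommutes with `d`, the trace of `H ξ` is `d`-closed: at level one it therefore vanishes by
injectivity of `σ₀`, at level two it is removed by the corrections `δ ∧ θ` and `M κ`, whose
symbols cancel. Finally `σ₃` vanishes on `𝒱₃` because `∧⁴ℂ⁴` is a line, so the homotopy applies
to every `ξ ∈ 𝒱₃`.
-/

section Tuples

variable {α : Type*} {n : ℕ}

lemma cons_comp_succAbove_succ (x : α) (T : Fin (n+1) → α) (j : Fin (n+1)) :
    (Fin.cons x T : Fin (n+2) → α) ∘ j.succ.succAbove = Fin.cons x (T ∘ j.succAbove) :=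
  Fin.cons_comp_succ_succAbove x T j

lemma cons_elim0_eq_const (x : α) (A : Fin 0 → α) :
    (Fin.cons x A : Fin 1 → α) = fun _ => x :=
  funext fun t => by obtain rfl := Fin.fin_one_eq_zero t; rfl

lemma cons_comp_succAbove_eq_comp_cycleRange_symm (B : Fin (n+1) → α) (i : Fin (n+1)) :
    (Fin.cons (B i) (B ∘ i.succAbove) : Fin (n+1) → α) = B ∘ i.cycleRange.symm :=
  Fin.cons_removeNth_eq_comp_cycleRange_symm B i

lemma cons_comp_decomposeFin_symm (x : α) (T : Fin n → α) (π : Equiv.Perm (Fin n)) :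
    (Fin.cons x T : Fin (n+1) → α) ∘ Equiv.Perm.decomposeFin.symm (0, π)
      = Fin.cons x (T ∘ π) := by
  funext t
  cases t using Fin.cases <;> simp [Equiv.Perm.decomposeFin_symm_apply_succ]

lemma cons_cons_comp_swap (x y : α) (B : Fin n → α) :
    (Fin.cons x (Fin.cons y B) : Fin (n+2) → α) ∘ Equiv.swap 0 1 = Fin.cons y (Fin.cons x B) :=
  Matrix.cons_cons_comp_swap_zero_one x y B

lemma exists_perm_succAbove_eq (π : Equiv.Perm (Fin (n+1))) (i : Fin (n+1)) :
    ∃ τ : Equiv.Perm (Fin n), ∀ j, π (i.succAbove j) = (π i).succAbove (τ j) := by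
  classical
  set e : Option (Fin n) ≃ Option (Fin n) :=
    (finSuccEquiv' i).symm.trans (π.trans (finSuccEquiv' (π i)))
  refine ⟨e.removeNone, fun j => ?_⟩
  obtain ⟨j', hj'⟩ := Fin.exists_succAbove_eq fun h => Fin.succAbove_ne i j (π.injective h)
  have he : e (some j) = some j' := by simp [e, ← hj', finSuccEquiv'_succAbove]
  rw [← hj', Option.some_injective _ ((e.removeNone_some ⟨j', he⟩).trans he)]

end Tuples

section Symmetries

variable {q p : ℕ}

lemma antiSup_of_subsingleton [Subsingleton (Equiv.Perm (Fin q))] (f : Tens q p) : AntiSup f := by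
  intro σ A B
  simp [Subsingleton.elim σ 1]

lemma antiSup_of_swap {f : Tens 2 p} (h : ∀ A B, f (A ∘ Equiv.swap 0 1) B = -f A B) :
    AntiSup f := by
  intro σ A B
  rcases (by decide : ∀ π : Equiv.Perm (Fin 2), π = 1 ∨ π = Equiv.swap 0 1) σ with rfl | rfl
  · simp
  · simp [h]

lemma AntiSup.add {f g : Tens q p} (hf : AntiSup f) (hg : AntiSup g) : AntiSup (f + g) := by
  intro σ A B
  simp only [Pi.add_apply, hf σ A B, hg σ A B, mul_add]

lemma AntiSup.smul {f : Tens q p} (hf : AntiSup f) (c : ℂ) : AntiSup (c • f) := by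
  intro σ A B
  simp only [Pi.smul_apply, smul_eq_mul, hf σ A B]
  ring

lemma SymSub.add {f g : Tens q p} (hf : SymSub f) (hg : SymSub g) : SymSub (f + g) := by
  intro A σ B
  simp only [Pi.add_apply, hf A σ B, hg A σ B]

lemma SymSub.smul {f : Tens q p} (hf : SymSub f) (c : ℂ) : SymSub (c • f) := by
  intro A σ B
  simp only [Pi.smul_apply, hf A σ B]

lemma AntiSup.apply_eq_zero_of_eq {f : Tens q p} (hf : AntiSup f) {A : Fin q → Idx} {i j : Fin q}
    (hij : i ≠ j) (hA : A i = A j) (B : Fin p → Idx) : f A B = 0 := by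
  have hswap : A ∘ Equiv.swap i j = A := by
    funext t
    rcases eq_or_ne t i with rfl | hti
    · simp [hA]
    rcases eq_or_ne t j with rfl | htj
    · simp [hA]
    · simp [Equiv.swap_apply_of_ne_of_ne hti htj]
  have h := hf (Equiv.swap i j) A B
  rw [hswap, Equiv.Perm.sign_swap hij] at h
  push_cast at h
  linear_combination h / 2

lemma SymSub.apply_cons_cons_comm {f : Tens q (p+2)} (hf : SymSub f) (A : Fin q → Idx)
    (x y : Idx) (B : Fin p → Idx) :
    f A (Fin.cons x (Fin.cons y B)) = f A (Fin.cons y (Fin.cons x B)) := by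
  rw [← cons_cons_comp_swap, hf]

lemma antisymmetrize_comp_perm {t : ℕ} (g : (Fin t → Idx) → ℂ) (π : Equiv.Perm (Fin t))
    (A : Fin t → Idx) :
    antisymmetrize g (A ∘ π) = ((Equiv.Perm.sign π : ℤ) : ℂ) * antisymmetrize g A := by
  simp only [antisymmetrize]
  rw [mul_left_comm]
  congr 1
  rw [Finset.mul_sum]
  conv_rhs => rw [← Equiv.sum_comp (Equiv.mulLeft π)]
  refine Finset.sum_congr rfl fun σ _ => ?_
  rcases Int.units_eq_one_or (Equiv.Perm.sign π) with h | h <;>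
    simp [Equiv.Perm.sign_mul, h, Function.comp_assoc]

lemma symb_antiSup (v : Pt) (ξ : Tens q (p+1)) : AntiSup (symb v ξ) :=
  fun σ A _ => antisymmetrize_comp_perm _ σ A

end Symmetries

section SymbolMatrix

variable (v : Pt)

def normSqC : ℂ := ((∑ j : Fin 6, v j ^ 2 : ℝ) : ℂ)

variable {v} in
lemma normSqC_ne_zero (hv : v ≠ 0) : normSqC v ≠ 0 := by
  obtain ⟨j, hj⟩ := Function.ne_iff.mp hv
  replace hj : v j ≠ 0 := hj
  have hpos : 0 < ∑ j : Fin 6, v j ^ 2 :=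
    Finset.sum_pos' (fun i _ => sq_nonneg _) ⟨j, Finset.mem_univ j, by positivity⟩
  exact Complex.ofReal_ne_zero.mpr hpos.ne'

lemma conj_normSqC : conj (normSqC v) = normSqC v :=
  Complex.conj_ofReal _

lemma symbM_antisymm (a b : Idx) : symbM v a b = -symbM v b a := by
  have h : nablaCoeff a b = -nablaCoeff b a := by
    fin_cases a <;> fin_cases b <;> simp [nablaCoeff]
  simp [symbM, h]

lemma symbM_self (a : Idx) : symbM v a a = 0 := by
  linear_combination symbM_antisymm v a a / 2

lemma sum_symbM_mul_conj_symbM (a b : Idx) :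
    ∑ C : Idx, symbM v a C * conj (symbM v b C) = if a = b then normSqC v else 0 := by
  apply Complex.ext <;> fin_cases a <;> fin_cases b <;>
    simp [symbM, nablaCoeff, normSqC, Fin.sum_univ_succ, Complex.mul_re, Complex.mul_im,
      pow_two] <;> ring

/-- The inverse matrix `M(v)⁻¹ = |v|⁻² M(v)ᴴ`, written with `Mᵀ = -M`. -/
def symbMInv (a b : Idx) : ℂ := -(normSqC v)⁻¹ * conj (symbM v a b)

variable {v}

lemma sum_symbMInv_mul_sum_symbM (hv : v ≠ 0) (b : Idx) (x : Idx → ℂ) :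
    ∑ E : Idx, symbMInv v b E * ∑ D : Idx, symbM v D E * x D = -x b := by
  have h : ∀ D, ∑ E, symbMInv v b E * symbM v D E
      = -(normSqC v)⁻¹ * if D = b then normSqC v else 0 := by
    intro D
    rw [← sum_symbM_mul_conj_symbM, Finset.mul_sum]
    exact Finset.sum_congr rfl fun E _ => by rw [symbMInv]; ring
  simp_rw [Finset.mul_sum, ← mul_assoc]
  rw [Finset.sum_comm]
  simp_rw [← Finset.sum_mul, h]
  simp [normSqC_ne_zero hv]

lemma sum_symbM_mul_sum_symbMInv (hv : v ≠ 0) (a : Idx) (x : Idx → ℂ) :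
    ∑ D : Idx, symbM v D a * ∑ E : Idx, symbMInv v D E * x E = -x a := by
  have h : ∀ E, ∑ D, symbM v D a * symbMInv v D E
      = -(normSqC v)⁻¹ * if E = a then normSqC v else 0 := by
    intro E
    have hconj := congrArg conj (sum_symbM_mul_conj_symbM v E a)
    rw [map_sum, apply_ite conj, conj_normSqC, map_zero] at hconj
    rw [← hconj, Finset.mul_sum]
    refine Finset.sum_congr rfl fun D _ => ?_
    rw [symbMInv, symbM_antisymm v D a, symbM_antisymm v D E]
    simp only [map_mul, map_neg, Complex.conj_conj]
    ring
  simp_rw [Finset.mul_sum, ← mul_assoc]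
  rw [Finset.sum_comm]
  simp_rw [← Finset.sum_mul, h]
  simp [normSqC_ne_zero hv]

end SymbolMatrix

lemma antisymmetrize_eq_sum_succAbove {t : ℕ} (g : Idx → (Fin t → Idx) → ℂ)
    (hg : ∀ a T (τ : Equiv.Perm (Fin t)),
      g a (T ∘ τ) = ((Equiv.Perm.sign τ : ℤ) : ℂ) * g a T)
    (A : Fin (t+1) → Idx) :
    antisymmetrize (fun A' => g (A' 0) (Fin.tail A')) A
      = ((t+1 : ℕ) : ℂ)⁻¹ *
          ∑ j : Fin (t+1), (-1 : ℂ) ^ (j : ℕ) * g (A j) (A ∘ j.succAbove) := by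
  have hslot : ∀ i : Fin (t+1), g (A i) (fun s => A (Equiv.swap 0 i s.succ))
      = (if i = 0 then 1 else -1) * ((-1) ^ (i : ℕ) * g (A i) (A ∘ i.succAbove)) := by
    intro i
    cases i using Fin.cases with
    | zero => simp [Function.comp_def]
    | succ i =>
      have h : (fun s => A (Equiv.swap 0 i.succ s.succ))
          = (A ∘ i.succ.succAbove) ∘ i.cycleRange := by
        funext s
        simp [Fin.succAbove_cycleRange]
      rw [h, hg, Fin.sign_cycleRange]
      simp [pow_succ]
  have hterm : ∀ i τ, ((Equiv.Perm.sign (Equiv.Perm.decomposeFin.symm (i, τ)) : ℤ) : ℂ)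
      * g ((A ∘ Equiv.Perm.decomposeFin.symm (i, τ)) 0)
          (Fin.tail (A ∘ Equiv.Perm.decomposeFin.symm (i, τ)))
      = (-1) ^ (i : ℕ) * g (A i) (A ∘ i.succAbove) := by
    intro i τ
    have htail : Fin.tail (A ∘ Equiv.Perm.decomposeFin.symm (i, τ))
        = (fun s => A (Equiv.swap 0 i s.succ)) ∘ τ := by
      funext s
      simp [Fin.tail, Equiv.Perm.decomposeFin_symm_apply_succ]
    rw [htail, hg, Function.comp_apply, Equiv.Perm.decomposeFin_symm_apply_zero, hslot,
      Equiv.Perm.decomposeFin.symm_sign]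
    rcases Int.units_eq_one_or (Equiv.Perm.sign τ) with h | h <;> by_cases hi : i = 0 <;>
      simp [h, hi]
  rw [antisymmetrize, ← Equiv.sum_comp Equiv.Perm.decomposeFin.symm, Fintype.sum_prod_type]
  simp only [hterm, Finset.sum_const, Finset.card_univ, Fintype.card_perm, Fintype.card_fin,
    nsmul_eq_mul, Finset.mul_sum, ← mul_assoc]
  refine Finset.sum_congr rfl fun j _ => ?_
  rw [Nat.factorial_succ, Nat.cast_mul, mul_inv, mul_assoc _ _ (t.factorial : ℂ),
    inv_mul_cancel₀ (Nat.cast_ne_zero.mpr t.factorial_ne_zero), mul_one]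

section ExtSymb

variable (v : Pt) {q p : ℕ}

/-- `(q+1) σ_q` expanded along the superscript slots; the two agree on superscript-antisymmetric
tensors. -/
def extSymb : Tens q (p+1) →ₗ[ℂ] Tens (q+1) p where
  toFun ξ A B := ∑ j : Fin (q+1), (-1 : ℂ) ^ (j : ℕ) *
    ∑ D : Idx, symbM v D (A j) * ξ (A ∘ j.succAbove) (Fin.cons D B)
  map_add' ξ η := by
    ext A B
    simp only [Pi.add_apply, mul_add, Finset.sum_add_distrib]
  map_smul' c ξ := by
    ext A B
    simp only [Pi.smul_apply, smul_eq_mul, RingHom.id_apply, Finset.mul_sum]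
    exact Finset.sum_congr rfl fun _ _ => Finset.sum_congr rfl fun _ _ => by ring

lemma extSymb_apply (ξ : Tens q (p+1)) (A : Fin (q+1) → Idx) (B : Fin p → Idx) :
    extSymb v ξ A B = ∑ j : Fin (q+1), (-1 : ℂ) ^ (j : ℕ) *
      ∑ D : Idx, symbM v D (A j) * ξ (A ∘ j.succAbove) (Fin.cons D B) :=
  rfl

lemma extSymb_cons (ξ : Tens (q+1) (p+1)) (E : Idx) (A : Fin (q+1) → Idx) (T : Fin p → Idx) :
    extSymb v ξ (Fin.cons E A) T = ∑ D : Idx, symbM v D E * ξ A (Fin.cons D T)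
      - ∑ j : Fin (q+1), (-1 : ℂ) ^ (j : ℕ) *
          ∑ D : Idx, symbM v D (A j) * ξ (Fin.cons E (A ∘ j.succAbove)) (Fin.cons D T) := by
  rw [extSymb_apply, Fin.sum_univ_succ, sub_eq_add_neg, ← Finset.sum_neg_distrib]
  simp only [Fin.cons_zero, Fin.cons_succ, Fin.val_zero, Fin.val_succ, pow_zero, one_mul,
    Fin.succAbove_zero, Fin.cons_comp_succ, cons_comp_succAbove_succ]
  congr 1
  exact Finset.sum_congr rfl fun j _ => by ring

lemma extSymb_cons_tens_zero (ξ : Tens 0 (p+1)) (E : Idx) (A : Fin 0 → Idx) (T : Fin p → Idx) :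
    extSymb v ξ (Fin.cons E A) T = ∑ D : Idx, symbM v D E * ξ A (Fin.cons D T) := by
  simp [extSymb_apply, Subsingleton.elim _ (Fin.elim0 : Fin 0 → Idx)]

lemma symb_eq_smul_extSymb {ξ : Tens q (p+1)} (hξ : AntiSup ξ) :
    symb v ξ = ((q+1 : ℕ) : ℂ)⁻¹ • extSymb v ξ := by
  ext A B
  refine antisymmetrize_eq_sum_succAbove (fun a T => ∑ D, symbM v D a * ξ T (Fin.cons D B))
    (fun a T τ => ?_) A
  simp only [hξ τ, Finset.mul_sum]
  exact Finset.sum_congr rfl fun _ _ => by ring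

variable {v}

lemma extSymb_eq_zero_of_symb_eq_zero {ξ : Tens q (p+1)} (hξ : AntiSup ξ)
    (h : ∀ A B, symb v ξ A B = 0) : extSymb v ξ = 0 := by
  have hsymb : symb v ξ = 0 := funext₂ h
  rw [symb_eq_smul_extSymb v hξ] at hsymb
  exact (smul_eq_zero.mp hsymb).resolve_left (inv_ne_zero (Nat.cast_ne_zero.mpr q.succ_ne_zero))

lemma extSymb_antiSup {ξ : Tens q (p+1)} (hξ : AntiSup ξ) : AntiSup (extSymb v ξ) := by
  have h : extSymb v ξ = ((q+1 : ℕ) : ℂ) • symb v ξ := by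
    rw [symb_eq_smul_extSymb v hξ, smul_smul,
      mul_inv_cancel₀ (Nat.cast_ne_zero.mpr q.succ_ne_zero), one_smul]
  rw [h]
  exact (symb_antiSup v ξ).smul _

lemma extSymb_symSub {ξ : Tens q (p+1)} (hξ : SymSub ξ) : SymSub (extSymb v ξ) := by
  intro A π B
  unfold SymSub at hξ
  simp only [extSymb_apply, ← cons_comp_decomposeFin_symm, hξ]

end ExtSymb

lemma sum_comp_perm_succAbove {p : ℕ} (F : Idx → (Fin p → Idx) → ℂ)
    (hF : ∀ x T (τ : Equiv.Perm (Fin p)), F x (T ∘ τ) = F x T)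
    (π : Equiv.Perm (Fin (p+1))) (B : Fin (p+1) → Idx) :
    ∑ i : Fin (p+1), F ((B ∘ π) i) ((B ∘ π) ∘ i.succAbove)
      = ∑ i : Fin (p+1), F (B i) (B ∘ i.succAbove) := by
  rw [← Equiv.sum_comp π (fun i => F (B i) (B ∘ i.succAbove))]
  refine Finset.sum_congr rfl fun i _ => ?_
  obtain ⟨τ, hτ⟩ := exists_perm_succAbove_eq π i
  have h : (B ∘ π) ∘ i.succAbove = (B ∘ (π i).succAbove) ∘ τ := by
    funext j
    simp [hτ]
  rw [h, hF, Function.comp_apply]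

section Homotopy

variable (v : Pt) {q p : ℕ}

def symbHomotopy (η : Tens (q+1) p) : Tens q (p+1) :=
  fun A B => ∑ i : Fin (p+1), ∑ E : Idx,
    symbMInv v (B i) E * η (Fin.cons E A) (B ∘ i.succAbove)

lemma symbHomotopy_cons (η : Tens (q+1) (p+1)) (A : Fin q → Idx) (D : Idx)
    (B : Fin (p+1) → Idx) :
    symbHomotopy v η A (Fin.cons D B) = ∑ E : Idx, symbMInv v D E * η (Fin.cons E A) B
      + ∑ i : Fin (p+1), ∑ E : Idx,
          symbMInv v (B i) E * η (Fin.cons E A) (Fin.cons D (B ∘ i.succAbove)) := by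
  simp only [symbHomotopy, Fin.sum_univ_succ, Fin.cons_zero, Fin.cons_succ, Fin.succAbove_zero,
    Fin.cons_comp_succ, cons_comp_succAbove_succ]

variable {v}

lemma symbHomotopy_symSub {η : Tens (q+1) p} (hη : SymSub η) : SymSub (symbHomotopy v η) := by
  intro A π B
  exact sum_comp_perm_succAbove (fun x T => ∑ E, symbMInv v x E * η (Fin.cons E A) T)
    (fun x T τ => Finset.sum_congr rfl fun E _ => by rw [hη]) π B

lemma symbHomotopy_antiSup {η : Tens (q+1) p} (hη : AntiSup η) :
    AntiSup (symbHomotopy v η) := by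
  intro π A B
  simp only [symbHomotopy, Finset.mul_sum]
  refine Finset.sum_congr rfl fun i _ => Finset.sum_congr rfl fun E _ => ?_
  rw [← cons_comp_decomposeFin_symm, hη, Equiv.Perm.decomposeFin.symm_sign]
  simp only [if_true, one_mul]
  ring

lemma sum_slots_symbMInv_mul_sum_symbM (hv : v ≠ 0) {n : ℕ} {ξ : Tens n (p+1)} (hs : SymSub ξ)
    (A : Fin n → Idx) (B : Fin (p+1) → Idx) :
    ∑ i : Fin (p+1), ∑ E : Idx, symbMInv v (B i) E *
      ∑ D : Idx, symbM v D E * ξ A (Fin.cons D (B ∘ i.succAbove))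
      = -((p+1 : ℕ) : ℂ) * ξ A B := by
  simp only [sum_symbMInv_mul_sum_symbM hv (B _) (fun D => ξ A (Fin.cons D (B ∘ _ )))]
  unfold SymSub at hs
  simp only [cons_comp_succAbove_eq_comp_cycleRange_symm, hs, Finset.sum_neg_distrib,
    Finset.sum_const, Finset.card_univ, Fintype.card_fin, nsmul_eq_mul, neg_mul]

lemma symbHomotopy_extSymb_tens_zero (hv : v ≠ 0) {ξ : Tens 0 (p+1)} (hs : SymSub ξ) :
    symbHomotopy v (extSymb v ξ) = -((p+1 : ℕ) : ℂ) • ξ := by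
  ext A B
  simp only [symbHomotopy, extSymb_cons_tens_zero, sum_slots_symbMInv_mul_sum_symbM hv hs,
    Pi.smul_apply, smul_eq_mul]

theorem symbHomotopy_extSymb_add_extSymb_symbHomotopy (hv : v ≠ 0) {ξ : Tens (q+1) (p+1)}
    (ha : AntiSup ξ) (hs : SymSub ξ) :
    symbHomotopy v (extSymb v ξ) + extSymb v (symbHomotopy v ξ)
      = -(((p+1) + (q+1) : ℕ) : ℂ) • ξ := by
  ext A B
  set X := ∑ i : Fin (p+1), ∑ j : Fin (q+1), ∑ D : Idx, ∑ E : Idx, (-1 : ℂ) ^ (j : ℕ) *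
    (symbMInv v (B i) E * (symbM v D (A j) *
      ξ (Fin.cons E (A ∘ j.succAbove)) (Fin.cons D (B ∘ i.succAbove))))
  have hHD : symbHomotopy v (extSymb v ξ) A B = -((p+1 : ℕ) : ℂ) * ξ A B - X := by
    simp only [symbHomotopy, extSymb_cons, mul_sub, Finset.sum_sub_distrib,
      sum_slots_symbMInv_mul_sum_symbM hv hs]
    congr 1
    refine Finset.sum_congr rfl fun i _ => ?_
    simp only [Finset.mul_sum]
    rw [Finset.sum_comm]
    exact Finset.sum_congr rfl fun j _ => by
      rw [Finset.sum_comm]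
      exact Finset.sum_congr rfl fun D _ => Finset.sum_congr rfl fun E _ => by ring
  have hDH : extSymb v (symbHomotopy v ξ) A B = -((q+1 : ℕ) : ℂ) * ξ A B + X := by
    have hdiag : ∀ j : Fin (q+1), ∑ D : Idx, symbM v D (A j) *
        ∑ E : Idx, symbMInv v D E * ξ (Fin.cons E (A ∘ j.succAbove)) B
          = -((-1) ^ (j : ℕ) * ξ A B) := by
      intro j
      rw [sum_symbM_mul_sum_symbMInv hv (A j) (fun E => ξ (Fin.cons E (A ∘ j.succAbove)) B),
        cons_comp_succAbove_eq_comp_cycleRange_symm A j, ha, ← Equiv.Perm.inv_def,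
        Equiv.Perm.sign_inv, Fin.sign_cycleRange]
      push_cast
      ring
    simp only [extSymb_apply, symbHomotopy_cons, mul_add, Finset.sum_add_distrib, hdiag]
    congr 1
    · have hsq : ∀ j : Fin (q+1),
          (-1 : ℂ) ^ (j : ℕ) * -((-1) ^ (j : ℕ) * ξ A B) = -ξ A B :=
        fun j => by rw [mul_neg, ← mul_assoc, ← pow_add, ← two_mul, pow_mul]; simp
      simp only [hsq, Finset.sum_neg_distrib, Finset.sum_const, Finset.card_univ,
        Fintype.card_fin, nsmul_eq_mul, neg_mul]
    · simp only [Finset.mul_sum]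
      conv_lhs => enter [2, j]; rw [Finset.sum_comm]
      rw [Finset.sum_comm]
      exact Finset.sum_congr rfl fun i _ => Finset.sum_congr rfl fun j _ =>
        Finset.sum_congr rfl fun D _ => Finset.sum_congr rfl fun E _ => by ring
  simp only [Pi.add_apply, Pi.smul_apply, smul_eq_mul, hHD, hDH]
  push_cast
  ring

end Homotopy

section HomotopyConsequences

variable {v : Pt} {q p : ℕ}

@[simp] lemma symbHomotopy_zero : symbHomotopy v (0 : Tens (q+1) p) = 0 := by
  ext A B
  simp [symbHomotopy]

lemma eq_zero_of_extSymb_eq_zero (hv : v ≠ 0) {ξ : Tens 0 (p+1)} (hs : SymSub ξ)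
    (h : extSymb v ξ = 0) : ξ = 0 := by
  have hH := symbHomotopy_extSymb_tens_zero hv hs
  rw [h, symbHomotopy_zero, eq_comm, smul_eq_zero] at hH
  exact hH.resolve_left (neg_ne_zero.mpr (Nat.cast_ne_zero.mpr p.succ_ne_zero))

lemma extSymb_symbHomotopy_of_extSymb_eq_zero (hv : v ≠ 0) {ξ : Tens (q+1) (p+1)}
    (ha : AntiSup ξ) (hs : SymSub ξ) (h : extSymb v ξ = 0) :
    extSymb v (symbHomotopy v ξ) = -(((p+1) + (q+1) : ℕ) : ℂ) • ξ := by
  simpa [h] using symbHomotopy_extSymb_add_extSymb_symbHomotopy hv ha hs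

end HomotopyConsequences

lemma sum_sum_eq_zero_of_antisymm {ι : Type*} [Fintype ι] {f : ι → ι → ℂ}
    (h : ∀ x y, f x y = -f y x) : ∑ x, ∑ y, f x y = 0 := by
  have hneg : ∑ x, ∑ y, f x y = -∑ x, ∑ y, f x y := calc
    _ = ∑ x, ∑ y, -f y x := by simp only [← h]
    _ = -∑ x, ∑ y, f x y := by rw [Finset.sum_comm]; simp only [Finset.sum_neg_distrib]
  linear_combination hneg / 2

section Contraction

variable {q p : ℕ}

lemma contr_eq_sum_cons {ξ : Tens (q+1) (p+1)} (hs : SymSub ξ) (A : Fin q → Idx)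
    (B : Fin p → Idx) : contr ξ A B = ∑ C : Idx, ξ (Fin.cons C A) (Fin.cons C B) := by
  refine Finset.sum_congr rfl fun C _ => ?_
  exact (Fin.snoc_eq_cons_rotate B C).symm ▸ hs (Fin.cons C A) (finRotate (p+1)) (Fin.cons C B)

lemma contr_symSub {ξ : Tens (q+1) (p+1)} (hs : SymSub ξ) : SymSub (contr ξ) := by
  intro A π B
  simp only [contr_eq_sum_cons hs, ← cons_comp_decomposeFin_symm, hs _ _ _]

lemma contr_add (ξ η : Tens (q+1) (p+1)) : contr (ξ + η) = contr ξ + contr η := by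
  ext A B
  simp [contr, Finset.sum_add_distrib]

lemma contr_smul (c : ℂ) (ξ : Tens (q+1) (p+1)) : contr (c • ξ) = c • contr ξ := by
  ext A B
  simp [contr, Finset.mul_sum]

lemma contr_contr {η : Tens (q+2) (p+2)} (ha : AntiSup η) (hs : SymSub η) :
    contr (contr η) = 0 := by
  ext A B
  rw [contr_eq_sum_cons (contr_symSub hs)]
  simp only [contr_eq_sum_cons hs]
  refine sum_sum_eq_zero_of_antisymm fun x y => ?_
  rw [← cons_cons_comp_swap, ha, Equiv.Perm.sign_swap (by simp), hs.apply_cons_cons_comm]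
  simp

lemma contr_extSymb (v : Pt) {ξ : Tens (q+1) (p+2)} (hs : SymSub ξ) :
    contr (extSymb v ξ) = -extSymb v (contr ξ) := by
  ext A B
  have hdiag : ∑ C : Idx, ∑ D : Idx, symbM v D C * ξ A (Fin.cons D (Fin.cons C B)) = 0 :=
    sum_sum_eq_zero_of_antisymm fun C D => by
      rw [symbM_antisymm v D C, hs.apply_cons_cons_comm]
      ring
  rw [contr_eq_sum_cons (extSymb_symSub hs)]
  simp only [extSymb_cons, Finset.sum_sub_distrib, hdiag, zero_sub]
  simp only [Pi.neg_apply, extSymb_apply, contr_eq_sum_cons hs, Finset.mul_sum]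
  congr 1
  rw [Finset.sum_comm]
  refine Finset.sum_congr rfl fun j _ => ?_
  rw [Finset.sum_comm]
  exact Finset.sum_congr rfl fun D _ => Finset.sum_congr rfl fun C _ => by
    rw [hs.apply_cons_cons_comm]

end Contraction

lemma sum_neg_one_pow_mul_sum_neg_one_pow_mul_eq_zero {α R : Type*} [CommRing R] {n : ℕ}
    (g : α → α → (Fin n → α) → R) (hg : ∀ x y T, g x y T = g y x T)
    (A : Fin (n+2) → α) :
    ∑ i : Fin (n+2), (-1 : R) ^ (i : ℕ) * ∑ j : Fin (n+1), (-1 : R) ^ (j : ℕ) *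
      g (A i) ((A ∘ i.succAbove) j) ((A ∘ i.succAbove) ∘ j.succAbove) = 0 := by
  simp only [Finset.mul_sum, ← mul_assoc, ← pow_add]
  rw [Fin.sum_sum_eq_sum_triangle_add]
  refine Finset.sum_eq_zero fun i _ => Finset.sum_eq_zero fun j hj => ?_
  rw [Finset.mem_Ici] at hj
  have h₁ : i.castSucc.succAbove j = j.succ :=
    Fin.succAbove_of_le_castSucc _ _ (Fin.castSucc_le_castSucc_iff.mpr hj)
  have h₂ : j.succ.succAbove i = i.castSucc :=
    Fin.succAbove_of_castSucc_lt _ _ (Fin.castSucc_lt_succ_iff.mpr hj)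
  have hrem : (A ∘ i.castSucc.succAbove) ∘ j.succAbove
      = (A ∘ j.succ.succAbove) ∘ i.succAbove := by
    have h := Fin.removeNth_removeNth_eq_swap A j i.castSucc
    rwa [h₁, Fin.predAbove_castSucc_of_le _ _ hj] at h
  simp only [Function.comp_apply, h₁, h₂, hrem, hg (A j.succ), Fin.val_castSucc, Fin.val_succ]
  ring

lemma extSymb_extSymb (v : Pt) {q p : ℕ} {ξ : Tens q (p+2)} (hs : SymSub ξ) :
    extSymb v (extSymb v ξ) = 0 := by
  ext A B
  set g : Idx → Idx → (Fin q → Idx) → ℂ := fun x y T =>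
    ∑ D : Idx, ∑ E : Idx, symbM v D x * (symbM v E y * ξ T (Fin.cons E (Fin.cons D B)))
  have hg : ∀ x y T, g x y T = g y x T := fun x y T => by
    simp only [g]
    rw [Finset.sum_comm]
    exact Finset.sum_congr rfl fun E _ => Finset.sum_congr rfl fun D _ => by
      rw [hs.apply_cons_cons_comm]
      ring
  rw [extSymb_apply, Pi.zero_apply, Pi.zero_apply,
    ← sum_neg_one_pow_mul_sum_neg_one_pow_mul_eq_zero g hg A]
  refine Finset.sum_congr rfl fun i _ => congrArg _ ?_
  simp only [g, extSymb_apply, Finset.mul_sum]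
  rw [Finset.sum_comm]
  exact Finset.sum_congr rfl fun j _ => Finset.sum_congr rfl fun D _ =>
    Finset.sum_congr rfl fun E _ => by ring

lemma AntiSup.eq_zero_of_apply_id {p : ℕ} {f : Tens 4 p} (hf : AntiSup f)
    (h : ∀ B, f id B = 0) : f = 0 := by
  ext A B
  by_cases hA : Function.Injective A
  · have hAe : A = id ∘ Equiv.ofBijective A (Finite.injective_iff_bijective.mp hA) := rfl
    rw [hAe, hf, h, mul_zero]
    rfl
  · obtain ⟨i, j, hij, hne⟩ := Function.not_injective_iff.mp hA
    exact hf.apply_eq_zero_of_eq hne hij B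

/-- Since `∧⁴ℂ⁴` is a line it suffices to evaluate at `A = id`, where `σ₃ ξ` pairs the
antisymmetric `M` with `ζ_{jD} = ± ξ^{[0123]∖j}_{D…}`; the six trace conditions `e..` say that `ζ`
is symmetric. -/
lemma extSymb_tens_three_eq_zero (v : Pt) {p : ℕ} {ξ : Tens 3 (p+1)} (ha : AntiSup ξ)
    (hs : SymSub ξ) (htf : ∀ A B, contr ξ A B = 0) : extSymb v ξ = 0 := by
  refine (extSymb_antiSup ha).eq_zero_of_apply_id fun B => ?_
  have htr : ∀ F G : Idx, ∑ C : Idx, ξ ![C, F, G] (Fin.cons C B) = 0 := fun F G =>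
    (contr_eq_sum_cons hs ![F, G] B).symm.trans (htf _ _)
  have hswap01 : ∀ x y z S, ξ ![y, x, z] S = -ξ ![x, y, z] S := fun x y z S => by
    rw [← Matrix.cons_cons_comp_swap_zero_one x y ![z], ha, Equiv.Perm.sign_swap (by decide)]
    simp
  have hswap12 : ∀ x y z S, ξ ![x, z, y] S = -ξ ![x, y, z] S := fun x y z S => by
    have h : ![x, y, z] ∘ Equiv.swap 1 2 = ![x, z, y] := by
      funext t
      fin_cases t <;> rfl
    rw [← h, ha, Equiv.Perm.sign_swap (by decide)]
    simp
  have hrep01 : ∀ x z S, ξ ![x, x, z] S = 0 := fun x z S =>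
    ha.apply_eq_zero_of_eq (i := 0) (j := 1) (by decide) rfl S
  have hrep02 : ∀ x y S, ξ ![x, y, x] S = 0 := fun x y S =>
    ha.apply_eq_zero_of_eq (i := 0) (j := 2) (by decide) rfl S
  have hcycle : ∀ x y z S, ξ ![z, x, y] S = ξ ![x, y, z] S := fun x y z S => by
    rw [hswap01, hswap12, neg_neg]
  have e23 := htr 2 3
  have e13 := htr 1 3
  have e12 := htr 1 2
  have e03 := htr 0 3
  have e02 := htr 0 2
  have e01 := htr 0 1
  simp only [Fin.sum_univ_four, hrep01, hrep02, add_zero, zero_add] at e23 e13 e12 e03 e02 e01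
  rw [hswap01 1 2 3] at e13
  rw [hcycle 1 2 3] at e12
  rw [hswap01 0 1 3, hswap01 0 2 3] at e03
  rw [hswap01 0 1 2, hcycle 0 2 3] at e02
  rw [hcycle 0 1 2, hcycle 0 1 3] at e01
  have hc0 : (id ∘ (0 : Fin 4).succAbove : Fin 3 → Idx) = ![1, 2, 3] := by decide
  have hc1 : (id ∘ (1 : Fin 4).succAbove : Fin 3 → Idx) = ![0, 2, 3] := by decide
  have hc2 : (id ∘ (2 : Fin 4).succAbove : Fin 3 → Idx) = ![0, 1, 3] := by decide
  have hc3 : (id ∘ (3 : Fin 4).succAbove : Fin 3 → Idx) = ![0, 1, 2] := by decide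
  rw [extSymb_apply]
  simp only [Nat.reduceAdd, Fin.sum_univ_four, hc0, hc1, hc2, hc3, id, symbM_self,
    Fin.coe_ofNat_eq_mod, Nat.reduceMod]
  rw [symbM_antisymm v 0 1, symbM_antisymm v 0 2, symbM_antisymm v 0 3,
    symbM_antisymm v 1 2, symbM_antisymm v 1 3, symbM_antisymm v 2 3]
  linear_combination symbM v 1 0 * e23 - symbM v 2 0 * e13 + symbM v 3 0 * e12
    + symbM v 2 1 * e03 - symbM v 3 1 * e02 + symbM v 3 2 * e01

section Corrections

variable {p : ℕ}

/-- The trace-insertion `δ^{[A₀}_{(B} θ^{A₁]}_{…)}`, up to normalisation. -/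
def traceInsert (θ : Tens 1 (p+1)) : Tens 2 (p+2) :=
  fun A B => ∑ i : Fin (p+2),
    ((if A 0 = B i then 1 else 0) * θ (fun _ => A 1) (B ∘ i.succAbove)
      - (if A 1 = B i then 1 else 0) * θ (fun _ => A 0) (B ∘ i.succAbove))

def symbMMul (v : Pt) (κ : Tens 0 (p+2)) : Tens 2 (p+2) :=
  fun A B => symbM v (A 0) (A 1) * κ Fin.elim0 B

lemma traceInsert_symSub {θ : Tens 1 (p+1)} (hθ : SymSub θ) : SymSub (traceInsert θ) := by
  intro A π B
  simp only [traceInsert, Finset.sum_sub_distrib]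
  congr 1
  · exact sum_comp_perm_succAbove (fun x T => (if A 0 = x then 1 else 0) * θ (fun _ => A 1) T)
      (fun x T τ => by rw [hθ]) π B
  · exact sum_comp_perm_succAbove (fun x T => (if A 1 = x then 1 else 0) * θ (fun _ => A 0) T)
      (fun x T τ => by rw [hθ]) π B

lemma traceInsert_antiSup (θ : Tens 1 (p+1)) : AntiSup (traceInsert θ) := by
  refine antiSup_of_swap fun A B => ?_
  simp only [traceInsert, Function.comp_apply, Equiv.swap_apply_left, Equiv.swap_apply_right,
    ← Finset.sum_neg_distrib]
  exact Finset.sum_congr rfl fun i _ => by ring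

lemma symbMMul_symSub (v : Pt) {κ : Tens 0 (p+2)} (hκ : SymSub κ) : SymSub (symbMMul v κ) := by
  intro A π B
  simp only [symbMMul, hκ Fin.elim0 π B]

lemma symbMMul_antiSup (v : Pt) (κ : Tens 0 (p+2)) : AntiSup (symbMMul v κ) := by
  refine antiSup_of_swap fun A B => ?_
  simp only [symbMMul, Function.comp_apply, Equiv.swap_apply_left, Equiv.swap_apply_right,
    symbM_antisymm v (A 1), neg_mul]

lemma traceInsert_cons (θ : Tens 1 (p+1)) (A : Fin 2 → Idx) (D : Idx) (B : Fin (p+1) → Idx) :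
    traceInsert θ A (Fin.cons D B)
      = ((if A 0 = D then 1 else 0) * θ (fun _ => A 1) B
          - (if A 1 = D then 1 else 0) * θ (fun _ => A 0) B)
        + ∑ i : Fin (p+1),
            ((if A 0 = B i then 1 else 0) * θ (fun _ => A 1) (Fin.cons D (B ∘ i.succAbove))
              - (if A 1 = B i then 1 else 0) *
                  θ (fun _ => A 0) (Fin.cons D (B ∘ i.succAbove))) := by
  simp only [traceInsert, Fin.sum_univ_succ, Fin.cons_zero, Fin.cons_succ, Fin.succAbove_zero,
    Fin.cons_comp_succ, cons_comp_succAbove_succ]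

lemma contr_traceInsert {θ : Tens 1 (p+1)} (hs : SymSub θ) (htf : contr θ = 0) :
    contr (traceInsert θ) = ((p+4 : ℕ) : ℂ) • θ := by
  ext A B
  have hA : (fun _ => A 0) = A := funext fun t => by rw [Subsingleton.elim t 0]
  have htf' : ∀ T, ∑ C : Idx, θ (fun _ => C) (Fin.cons C T) = 0 := fun T => by
    have h0 : contr θ Fin.elim0 T = 0 := congrFun₂ htf Fin.elim0 T
    rw [← h0, contr_eq_sum_cons hs]
    simp only [cons_elim0_eq_const]
  have hslot : ∀ i : Fin (p+1), ∑ C : Idx,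
      ((if C = B i then 1 else 0) * θ (fun _ => A 0) (Fin.cons C (B ∘ i.succAbove))
        - (if A 0 = B i then 1 else 0) * θ (fun _ => C) (Fin.cons C (B ∘ i.succAbove)))
        = θ A B := by
    intro i
    rw [Finset.sum_sub_distrib, ← Finset.mul_sum, htf', mul_zero, sub_zero]
    simp [cons_comp_succAbove_eq_comp_cycleRange_symm, hs _ _ _, hA]
  rw [contr_eq_sum_cons (traceInsert_symSub hs)]
  simp only [traceInsert_cons, Fin.cons_zero, Fin.cons_one, Finset.sum_add_distrib]
  rw [Finset.sum_comm, Finset.sum_congr rfl fun i _ => hslot i]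
  simp only [↓reduceIte, hA, one_mul, ite_mul, zero_mul, Finset.sum_sub_distrib, Finset.sum_const,
    Finset.card_univ, Fintype.card_fin, nsmul_eq_mul, Finset.sum_ite_eq, Finset.mem_univ,
    Nat.cast_add, Nat.cast_one, Nat.cast_ofNat, Pi.smul_apply, smul_eq_mul]
  ring

lemma contr_symbMMul (v : Pt) {κ : Tens 0 (p+2)} {θ : Tens 1 (p+1)} (hs : SymSub κ)
    (hκ : extSymb v κ = θ) : contr (symbMMul v κ) = θ := by
  ext A B
  rw [contr_eq_sum_cons (symbMMul_symSub v hs), ← hκ, ← Fin.cons_self_tail A,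
    extSymb_cons_tens_zero]
  simp [symbMMul, Subsingleton.elim (Fin.tail A) Fin.elim0]

lemma sum_symbM_mul_traceInsert_cons (v : Pt) (θ : Tens 1 (p+1)) (A : Fin 2 → Idx) (a : Idx)
    (B : Fin (p+1) → Idx) :
    ∑ D : Idx, symbM v D a * traceInsert θ A (Fin.cons D B)
      = (symbM v (A 0) a * θ (fun _ => A 1) B - symbM v (A 1) a * θ (fun _ => A 0) B)
        + ∑ i : Fin (p+1),
            ((if A 0 = B i then 1 else 0) *
                ∑ D : Idx, symbM v D a * θ (fun _ => A 1) (Fin.cons D (B ∘ i.succAbove))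
              - (if A 1 = B i then 1 else 0) *
                ∑ D : Idx, symbM v D a * θ (fun _ => A 0) (Fin.cons D (B ∘ i.succAbove))) := by
  simp only [traceInsert_cons, mul_add, Finset.sum_add_distrib]
  congr 1
  · simp [mul_sub, Finset.sum_sub_distrib, eq_comm (a := A _)]
  · simp only [Finset.mul_sum]
    rw [Finset.sum_comm]
    refine Finset.sum_congr rfl fun i _ => ?_
    rw [← Finset.sum_sub_distrib]
    exact Finset.sum_congr rfl fun D _ => by ring

lemma extSymb_traceInsert_add_two_smul (v : Pt) {θ : Tens 1 (p+1)} {κ : Tens 0 (p+2)}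
    (hθ : extSymb v θ = 0) (hκ : extSymb v κ = θ) :
    extSymb v (traceInsert θ) + (2 : ℂ) • extSymb v (symbMMul v κ) = 0 := by
  ext A B
  set S : Idx → Idx → (Fin p → Idx) → ℂ := fun a b T =>
    ∑ D : Idx, symbM v D a * θ (fun _ => b) (Fin.cons D T)
  have hS : ∀ a b T, S a b T = S b a T := fun a b T => by
    have h := congrFun₂ hθ (Fin.cons a fun _ => b) T
    rw [extSymb_cons] at h
    simp only [Fin.sum_univ_succ (n := 0), Fin.sum_univ_zero, add_zero, Fin.val_zero, pow_zero,
      one_mul, Pi.zero_apply, sub_eq_zero, cons_elim0_eq_const] at h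
    exact h
  have hMκ : ∀ (A' : Fin 2 → Idx) (a : Idx),
      ∑ D : Idx, symbM v D a * symbMMul v κ A' (Fin.cons D B)
        = symbM v (A' 0) (A' 1) * θ (fun _ => a) B := by
    intro A' a
    have h := congrFun₂ hκ (Fin.cons a Fin.elim0) B
    rw [extSymb_cons_tens_zero, cons_elim0_eq_const] at h
    rw [← h, Finset.mul_sum]
    exact Finset.sum_congr rfl fun D _ => by simp only [symbMMul]; ring
  have hval : ∀ (u : Fin 3) (w : Fin 2) (x : Fin 3), u.succAbove w = x →
      (A ∘ u.succAbove) w = A x :=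
    fun u w x hx => by rw [Function.comp_apply, hx]
  simp only [Pi.add_apply, Pi.smul_apply, smul_eq_mul, Pi.zero_apply, extSymb_apply,
    Nat.reduceAdd, Fin.sum_univ_three, sum_symbM_mul_traceInsert_cons, hMκ]
  rw [hval 0 0 1 (by decide), hval 0 1 2 (by decide), hval 1 0 0 (by decide),
    hval 1 1 2 (by decide), hval 2 0 0 (by decide), hval 2 1 1 (by decide)]
  have hslots : ∑ i : Fin (p+1),
        ((if A 1 = B i then 1 else 0) * S (A 0) (A 2) (B ∘ i.succAbove)
          - (if A 2 = B i then 1 else 0) * S (A 0) (A 1) (B ∘ i.succAbove))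
      - ∑ i : Fin (p+1),
        ((if A 0 = B i then 1 else 0) * S (A 1) (A 2) (B ∘ i.succAbove)
          - (if A 2 = B i then 1 else 0) * S (A 1) (A 0) (B ∘ i.succAbove))
      + ∑ i : Fin (p+1),
        ((if A 0 = B i then 1 else 0) * S (A 2) (A 1) (B ∘ i.succAbove)
          - (if A 1 = B i then 1 else 0) * S (A 2) (A 0) (B ∘ i.succAbove)) = 0 := by
    rw [← Finset.sum_sub_distrib, ← Finset.sum_add_distrib]
    refine Finset.sum_eq_zero fun i _ => ?_
    rw [hS (A 0) (A 2), hS (A 0) (A 1), hS (A 1) (A 2)]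
    ring
  simp only [Fin.val_zero, Fin.val_one, Fin.val_two]
  linear_combination hslots + θ (fun _ => A 2) B * symbM_antisymm v (A 0) (A 1)
    - θ (fun _ => A 1) B * symbM_antisymm v (A 0) (A 2)
    + θ (fun _ => A 0) B * symbM_antisymm v (A 1) (A 2)

end Corrections

section Exactness

variable {v : Pt} {q p : ℕ}

lemma extSymb_contr_symbHomotopy (hv : v ≠ 0) {ξ : Tens (q+2) (p+1)} (ha : AntiSup ξ)
    (hs : SymSub ξ) (htf : contr ξ = 0) (hD : extSymb v ξ = 0) :
    extSymb v (contr (symbHomotopy v ξ)) = 0 := by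
  have h := contr_extSymb v (symbHomotopy_symSub (v := v) hs)
  rw [extSymb_symbHomotopy_of_extSymb_eq_zero hv ha hs hD, contr_smul, htf, smul_zero,
    eq_comm, neg_eq_zero] at h
  exact h

variable (v) in
/-- The scalar inverts `σ_q = (q+1)⁻¹ d` and `d (H ξ) = -(p+q+2) ξ` for `ξ ∈ ker d`. -/
def symbPreimage (ξ : Tens (q+1) (p+1)) : Tens q (p+2) :=
  (-((q+1 : ℕ) : ℂ) / ((p+1) + (q+1) : ℕ)) • symbHomotopy v ξ

lemma symbPreimage_antiSup {ξ : Tens (q+1) (p+1)} (ha : AntiSup ξ) :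
    AntiSup (symbPreimage v ξ) :=
  (symbHomotopy_antiSup ha).smul _

lemma symbPreimage_symSub {ξ : Tens (q+1) (p+1)} (hs : SymSub ξ) : SymSub (symbPreimage v ξ) :=
  (symbHomotopy_symSub hs).smul _

lemma extSymb_symbPreimage (hv : v ≠ 0) {ξ : Tens (q+1) (p+1)} (ha : AntiSup ξ)
    (hs : SymSub ξ) (hD : extSymb v ξ = 0) :
    extSymb v (symbPreimage v ξ) = ((q+1 : ℕ) : ℂ) • ξ := by
  rw [symbPreimage, map_smul, extSymb_symbHomotopy_of_extSymb_eq_zero hv ha hs hD, smul_smul]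
  congr 1
  have : (((p+1) + (q+1) : ℕ) : ℂ) ≠ 0 := Nat.cast_ne_zero.mpr (by omega)
  field_simp

lemma symb_symbPreimage (hv : v ≠ 0) {ξ : Tens (q+1) (p+1)} (ha : AntiSup ξ) (hs : SymSub ξ)
    (hD : extSymb v ξ = 0) : symb v (symbPreimage v ξ) = ξ := by
  rw [symb_eq_smul_extSymb v (symbPreimage_antiSup ha), extSymb_symbPreimage hv ha hs hD,
    smul_smul, inv_mul_cancel₀ (Nat.cast_ne_zero.mpr q.succ_ne_zero), one_smul]

theorem eq_zero_of_symb_eq_zero (hv : v ≠ 0) {ξ : Tens 0 (p+1)} (hξ : InV0 ξ)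
    (h : ∀ A B, symb v ξ A B = 0) : ∀ A B, ξ A B = 0 := by
  rw [eq_zero_of_extSymb_eq_zero hv hξ.2 (extSymb_eq_zero_of_symb_eq_zero hξ.1 h)]
  exact fun _ _ => rfl

theorem symb_symb_eq_zero {Ξ : Tens q (p+2)} (ha : AntiSup Ξ) (hs : SymSub Ξ) :
    ∀ A B, symb v (symb v Ξ) A B = 0 := by
  rw [symb_eq_smul_extSymb v (symb_antiSup v Ξ), symb_eq_smul_extSymb v ha, map_smul,
    extSymb_extSymb v hs, smul_zero, smul_zero]
  exact fun _ _ => rfl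

theorem symb_exact_one (hv : v ≠ 0) {ξ : Tens 1 (p+1)} (hξ : InV ξ)
    (h : ∀ A B, symb v ξ A B = 0) :
    ∃ Ξ : Tens 0 (p+2), InV0 Ξ ∧ ∀ A B, symb v Ξ A B = ξ A B := by
  obtain ⟨⟨ha, hs⟩, -⟩ := hξ
  refine ⟨symbPreimage v ξ, ⟨symbPreimage_antiSup ha, symbPreimage_symSub hs⟩,
    fun A B => ?_⟩
  rw [symb_symbPreimage hv ha hs (extSymb_eq_zero_of_symb_eq_zero ha h)]

theorem symb_exact_two (hv : v ≠ 0) {ξ : Tens 2 (p+1)} (hξ : InV ξ)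
    (h : ∀ A B, symb v ξ A B = 0) :
    ∃ Ξ : Tens 1 (p+2), InV Ξ ∧ ∀ A B, symb v Ξ A B = ξ A B := by
  obtain ⟨⟨ha, hs⟩, htf⟩ := hξ
  have hD := extSymb_eq_zero_of_symb_eq_zero ha h
  have hcontr : contr (symbHomotopy v ξ) = 0 :=
    eq_zero_of_extSymb_eq_zero hv (contr_symSub (symbHomotopy_symSub hs))
      (extSymb_contr_symbHomotopy hv ha hs (funext₂ htf) hD)
  refine ⟨symbPreimage v ξ,
    ⟨⟨symbPreimage_antiSup ha, symbPreimage_symSub hs⟩, fun A B => ?_⟩, fun A B => ?_⟩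
  · rw [symbPreimage, contr_smul, hcontr, smul_zero]
    rfl
  · rw [symb_symbPreimage hv ha hs hD]

lemma exists_isMixed_extSymb_eq_zero_contr_eq_smul (hv : v ≠ 0) {θ : Tens 1 (p+1)}
    (hθs : SymSub θ) (htf : contr θ = 0) (hDθ : extSymb v θ = 0) :
    ∃ χ : Tens 2 (p+2), IsMixed χ ∧ extSymb v χ = 0 ∧ contr χ = ((p+6 : ℕ) : ℂ) • θ := by
  set κ := symbPreimage v θ
  have hκs : SymSub κ := symbPreimage_symSub hθs
  have hDκ : extSymb v κ = θ := by
    simpa using extSymb_symbPreimage hv (antiSup_of_subsingleton (q := 1) θ) hθs hDθ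
  refine ⟨traceInsert θ + (2 : ℂ) • symbMMul v κ,
    ⟨(traceInsert_antiSup θ).add ((symbMMul_antiSup v κ).smul 2),
      (traceInsert_symSub hθs).add ((symbMMul_symSub v hκs).smul 2)⟩, ?_, ?_⟩
  · rw [map_add, map_smul, extSymb_traceInsert_add_two_smul v hDθ hDκ]
  · rw [contr_add, contr_smul, contr_traceInsert hθs htf, contr_symbMMul v hκs hDκ,
      ← one_add_one_eq_two, add_smul, one_smul]
    push_cast
    module

theorem symb_surjective_three (hv : v ≠ 0) {ξ : Tens 3 (p+1)} (hξ : InV ξ) :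
    ∃ Ξ : Tens 2 (p+2), InV Ξ ∧ ∀ A B, symb v Ξ A B = ξ A B := by
  obtain ⟨⟨ha, hs⟩, htf⟩ := hξ
  have hD : extSymb v ξ = 0 := extSymb_tens_three_eq_zero v ha hs htf
  set η := symbHomotopy v ξ
  have hηa : AntiSup η := symbHomotopy_antiSup ha
  have hηs : SymSub η := symbHomotopy_symSub hs
  have hDη : extSymb v η = -(((p+1) + (2+1) : ℕ) : ℂ) • ξ :=
    extSymb_symbHomotopy_of_extSymb_eq_zero hv ha hs hD
  obtain ⟨χ, hχ, hDχ, hcontrχ⟩ := exists_isMixed_extSymb_eq_zero_contr_eq_smul hv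
    (contr_symSub hηs) (contr_contr hηa hηs)
    (extSymb_contr_symbHomotopy hv ha hs (funext₂ htf) hD)
  have hp4 : ((p : ℂ) + 4) ≠ 0 := by exact_mod_cast (p + 3).succ_ne_zero
  have hp6 : ((p : ℂ) + 6) ≠ 0 := by exact_mod_cast (p + 5).succ_ne_zero
  have hcoef_contr : (-3 / (p + 4) : ℂ) + 3 / ((p + 4) * (p + 6)) * ((p+6 : ℕ) : ℂ) = 0 := by
    push_cast
    field_simp
    ring
  have hcoef_symb :
      ((2+1 : ℕ) : ℂ)⁻¹ * (-3 / (p + 4) : ℂ) * -(((p+1) + (2+1) : ℕ) : ℂ) = 1 := by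
    push_cast
    field_simp
    ring
  have hΞa : AntiSup ((-3 / (p + 4) : ℂ) • η + (3 / ((p + 4) * (p + 6)) : ℂ) • χ) :=
    (hηa.smul _).add (hχ.1.smul _)
  refine ⟨(-3 / (p + 4) : ℂ) • η + (3 / ((p + 4) * (p + 6)) : ℂ) • χ,
    ⟨⟨hΞa, (hηs.smul _).add (hχ.2.smul _)⟩, fun A B => ?_⟩, fun A B => ?_⟩
  · rw [contr_add, contr_smul, contr_smul, hcontrχ, smul_smul, ← add_smul, hcoef_contr,
      zero_smul]
    rfl
  · rw [symb_eq_smul_extSymb v hΞa, map_add, map_smul, map_smul, hDη, hDχ, smul_zero,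
      add_zero, smul_smul, smul_smul, hcoef_symb, one_smul]

end Exactness

theorem symbol_sequence_exact_general (m : ℕ) (v : Pt) (hv : v ≠ 0) :
    -- σ₀ is injective
    (∀ ξ : Tens 0 (m+4), InV0 ξ → (∀ A B, symb v ξ A B = 0) → ∀ A B, ξ A B = 0) ∧
    -- im σ₀ ⊆ ker σ₁
    (∀ Ξ : Tens 0 (m+4), InV0 Ξ → ∀ A B, symb v (symb v Ξ) A B = 0) ∧
    -- ker σ₁ ⊆ im σ₀
    (∀ ξ : Tens 1 (m+3), InV ξ → (∀ A B, symb v ξ A B = 0) →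
      ∃ Ξ : Tens 0 (m+4), InV0 Ξ ∧ ∀ A B, symb v Ξ A B = ξ A B) ∧
    -- im σ₁ ⊆ ker σ₂
    (∀ Ξ : Tens 1 (m+3), InV Ξ → ∀ A B, symb v (symb v Ξ) A B = 0) ∧
    -- ker σ₂ ⊆ im σ₁
    (∀ ξ : Tens 2 (m+2), InV ξ → (∀ A B, symb v ξ A B = 0) →
      ∃ Ξ : Tens 1 (m+3), InV Ξ ∧ ∀ A B, symb v Ξ A B = ξ A B) ∧
    -- σ₂ is surjective
    (∀ ξ : Tens 3 (m+1), InV ξ →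
      ∃ Ξ : Tens 2 (m+2), InV Ξ ∧ ∀ A B, symb v Ξ A B = ξ A B) :=
  ⟨fun _ hξ => eq_zero_of_symb_eq_zero hv hξ,
    fun _ hΞ => symb_symb_eq_zero hΞ.1 hΞ.2,
    fun _ hξ => symb_exact_one hv hξ,
    fun _ hΞ => symb_symb_eq_zero hΞ.1.1 hΞ.1.2,
    fun _ hξ => symb_exact_two hv hξ,
    fun _ hξ => symb_surjective_three hv hξ⟩

/-- For `k = m + 4 ≥ 4` and every `v ∈ ℝ⁶ \ {0}`, the symbol sequence
`0 → 𝒱₀ →σ₀ 𝒱₁ →σ₁ 𝒱₂ →σ₂ 𝒱₃ → 0` is exact; i.e. the `k`-monogenic complex is an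
elliptic complex. -/
theorem symbol_sequence_exact (k m : ℕ) (hk : k = m + 4) (v : Pt) (hv : v ≠ 0) :
    -- σ₀ is injective
    (∀ ξ : Tens 0 (m+4), InV0 ξ → (∀ A B, symb v ξ A B = 0) → ∀ A B, ξ A B = 0) ∧
    -- im σ₀ ⊆ ker σ₁
    (∀ Ξ : Tens 0 (m+4), InV0 Ξ → ∀ A B, symb v (symb v Ξ) A B = 0) ∧
    -- ker σ₁ ⊆ im σ₀
    (∀ ξ : Tens 1 (m+3), InV ξ → (∀ A B, symb v ξ A B = 0) →
      ∃ Ξ : Tens 0 (m+4), InV0 Ξ ∧ ∀ A B, symb v Ξ A B = ξ A B) ∧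
    -- im σ₁ ⊆ ker σ₂
    (∀ Ξ : Tens 1 (m+3), InV Ξ → ∀ A B, symb v (symb v Ξ) A B = 0) ∧
    -- ker σ₂ ⊆ im σ₁
    (∀ ξ : Tens 2 (m+2), InV ξ → (∀ A B, symb v ξ A B = 0) →
      ∃ Ξ : Tens 1 (m+3), InV Ξ ∧ ∀ A B, symb v Ξ A B = ξ A B) ∧
    -- σ₂ is surjective
    (∀ ξ : Tens 3 (m+1), InV ξ →
      ∃ Ξ : Tens 2 (m+2), InV Ξ ∧ ∀ A B, symb v Ξ A B = ξ A B) :=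
  symbol_sequence_exact_general m v hv

end
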